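/- Let m be a string of infinite length with μ_m its associated measure, M(x) := m(x) - m(0). Define C₀(z) := 2z and recursively C_{n}(z) := 2∫₀^z ∫_{(0,x]} C_{n-1}(r) dμ_m(r) dx. Then for every n ≥ 0 and z ≥ 0: C_n is nonnegative, nondecreasing on [0,∞), and satisfies C_n(z) ≤ (2z/n!)·(2∫₀^z M(x) dx)^n. -/

import Mathlib

open MeasureTheory Set

/-!
Induction on `n`. As `C n` is nonnegative and nondecreasing, `∫_{(0,x]} C n dμ_m` is at most
`μ_m (0,x] · C n x = M x · C n x`. Inserting the bound for `C n x` and enlarging `x` to `z`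
leaves `∫₀^z A^n M` with `A = ∫₀^· M`; since `M` is right-continuous it is the right derivative
of `A`, so this integral is `A z ^ (n + 1) / (n + 1)`.
-/

section Primitive

variable {f : ℝ → ℝ}

theorem primitive_nonneg_of_nonneg (hf : ∀ x, 0 ≤ x → 0 ≤ f x) {z : ℝ} (hz : 0 ≤ z) :
    0 ≤ ∫ x in (0 : ℝ)..z, f x :=
  intervalIntegral.integral_nonneg hz fun x hx => hf x hx.1

theorem monotoneOn_primitive_of_nonneg (hf : ∀ x, 0 ≤ x → 0 ≤ f x)
    (hint : ∀ b, IntervalIntegrable f volume 0 b) :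
    MonotoneOn (fun z => ∫ x in (0 : ℝ)..z, f x) (Ici 0) := fun _ ha b _ hab =>
  intervalIntegral.integral_mono_interval le_rfl ha hab
    (ae_restrict_of_forall_mem measurableSet_Ioc fun x hx => hf x hx.1.le) (hint b)

theorem Monotone.integral_primitive_pow_mul (hf : Monotone f)
    (hrc : ∀ x, ContinuousWithinAt f (Ici x) x) {a b : ℝ} (hab : a ≤ b) (n : ℕ) :
    ∫ x in a..b, (∫ t in a..x, f t) ^ n * f x = (∫ t in a..b, f t) ^ (n + 1) / (n + 1) := by
  set F := fun x => ∫ t in a..x, f t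
  have hint : ∀ c d, IntervalIntegrable f volume c d := fun c d =>
    (hf.monotoneOn _).intervalIntegrable
  have hF : Continuous F := intervalIntegral.continuous_primitive hint a
  have hF' : ∀ x, HasDerivWithinAt F (f x) (Ioi x) x := fun x =>
    (intervalIntegral.integral_hasDerivWithinAt_right (s := Ici x) (hint a x)
      hf.measurable.stronglyMeasurable.stronglyMeasurableAtFilter
      ((hrc x).mono Ioi_subset_Ici_self)).mono Ioi_subset_Ici_self
  have hderiv : ∀ x, HasDerivWithinAt (fun x => F x ^ (n + 1) / (n + 1)) (F x ^ n * f x)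
      (Ioi x) x := fun x => by
    refine (((hF' x).pow (n + 1)).div_const ((n : ℝ) + 1)).congr_deriv ?_
    push_cast
    field_simp
  rw [intervalIntegral.integral_eq_sub_of_hasDeriv_right_of_le hab
    ((hF.pow _).div_const _).continuousOn (fun x _ => hderiv x)
    ((hint a b).continuousOn_mul (hF.pow n).continuousOn)]
  simp [F]

end Primitive

section Stieltjes

variable {μ : Measure ℝ} [IsLocallyFiniteMeasure μ] {c : ℝ → ℝ}

theorem integrableOn_Ioc_zero_of_monotoneOn (hc : MonotoneOn c (Ici 0)) (x : ℝ) :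
    IntegrableOn c (Ioc 0 x) μ :=
  ((hc.mono Icc_subset_Ici_self).integrableOn_isCompact isCompact_Icc).mono_set
    Ioc_subset_Icc_self

theorem monotone_setIntegral_Ioc_zero (hc0 : ∀ x, 0 ≤ x → 0 ≤ c x)
    (hc : MonotoneOn c (Ici 0)) : Monotone fun x => ∫ r in Ioc 0 x, c r ∂μ := fun _ y hxy =>
  setIntegral_mono_set (integrableOn_Ioc_zero_of_monotoneOn hc y)
    (ae_restrict_of_forall_mem measurableSet_Ioc fun r hr => hc0 r hr.1.le)
    (Ioc_subset_Ioc_right hxy).eventuallyLE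

theorem setIntegral_Ioc_zero_le_of_monotoneOn (hc : MonotoneOn c (Ici 0)) {x : ℝ}
    (hx : 0 ≤ x) : ∫ r in Ioc 0 x, c r ∂μ ≤ μ.real (Ioc 0 x) * c x := by
  calc ∫ r in Ioc 0 x, c r ∂μ ≤ ∫ _ in Ioc 0 x, c x ∂μ :=
        setIntegral_mono_on (integrableOn_Ioc_zero_of_monotoneOn hc x)
          (integrableOn_const measure_Ioc_lt_top.ne) measurableSet_Ioc
          fun r hr => hc hr.1.le hx hr.2
    _ = μ.real (Ioc 0 x) * c x := by rw [setIntegral_const, smul_eq_mul]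

theorem StieltjesFunction.measureReal_Ioc (m : StieltjesFunction ℝ) {a b : ℝ} (hab : a ≤ b) :
    m.measure.real (Ioc a b) = m b - m a := by
  rw [measureReal_def, m.measure_Ioc, ENNReal.toReal_ofReal (sub_nonneg.2 (m.mono hab))]

end Stieltjes

theorem two_mul_integral_setIntegral_Ioc_le (m : StieltjesFunction ℝ) {c : ℝ → ℝ} {n : ℕ}
    (hc0 : ∀ r, 0 ≤ r → 0 ≤ c r) (hc : MonotoneOn c (Ici 0))
    (hcle : ∀ r, 0 ≤ r →
      c r ≤ (2 * r / Nat.factorial n) * (2 * ∫ x in (0 : ℝ)..r, (m x - m 0)) ^ n)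
    {z : ℝ} (hz : 0 ≤ z) :
    2 * ∫ x in (0 : ℝ)..z, (∫ r in Ioc 0 x, c r ∂ m.measure) ≤
      (2 * z / Nat.factorial (n + 1)) * (2 * ∫ x in (0 : ℝ)..z, (m x - m 0)) ^ (n + 1) := by
  set M := fun x => m x - m 0
  set A := fun z => ∫ x in (0 : ℝ)..z, M x
  set K := 2 * z / Nat.factorial n * 2 ^ n
  have hM : Monotone M := fun x y hxy => sub_le_sub_right (m.mono hxy) _
  have hM0 : ∀ x, 0 ≤ x → 0 ≤ M x := fun x hx => sub_nonneg.2 (m.mono hx)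
  have hMint : ∀ a b, IntervalIntegrable M volume a b := fun _ _ =>
    (hM.monotoneOn _).intervalIntegrable
  have hAcont : Continuous A := intervalIntegral.continuous_primitive hMint 0
  have hA0 : ∀ x, 0 ≤ x → 0 ≤ A x := fun x => primitive_nonneg_of_nonneg hM0
  have hpointwise : ∀ x ∈ Icc 0 z, ∫ r in Ioc 0 x, c r ∂m.measure ≤ K * (A x ^ n * M x) := by
    rintro x ⟨hx, hxz⟩
    calc ∫ r in Ioc 0 x, c r ∂m.measure ≤ M x * c x := by
          simpa only [m.measureReal_Ioc hx] using
            setIntegral_Ioc_zero_le_of_monotoneOn (μ := m.measure) hc hx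
      _ ≤ M x * ((2 * x / Nat.factorial n) * (2 * A x) ^ n) :=
          mul_le_mul_of_nonneg_left (hcle x hx) (hM0 x hx)
      _ ≤ M x * ((2 * z / Nat.factorial n) * (2 * A x) ^ n) := by
          have hMx := hM0 x hx
          have hAx := hA0 x hx
          gcongr
      _ = K * (A x ^ n * M x) := by ring
  calc 2 * ∫ x in (0 : ℝ)..z, (∫ r in Ioc 0 x, c r ∂ m.measure)
      ≤ 2 * ∫ x in (0 : ℝ)..z, K * (A x ^ n * M x) := by
        gcongr
        exact intervalIntegral.integral_mono_on hz
          ((monotone_setIntegral_Ioc_zero hc0 hc).intervalIntegrable)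
          (((hMint 0 z).continuousOn_mul (hAcont.pow n).continuousOn).const_mul K) hpointwise
    _ = 2 * K * (A z ^ (n + 1) / (n + 1)) := by
        rw [intervalIntegral.integral_const_mul,
          hM.integral_primitive_pow_mul (fun x => (m.right_continuous x).sub_const _) hz]
        ring
    _ = (2 * z / Nat.factorial (n + 1)) * (2 * A z) ^ (n + 1) := by
        rw [Nat.factorial_succ]
        push_cast
        simp only [K]
        field_simp
        ring

theorem stmt_5_general (m : StieltjesFunction ℝ)
    (M : ℝ → ℝ) (hM : ∀ x, M x = m x - m 0)
    (C : ℕ → ℝ → ℝ)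
    (hC0 : ∀ z, C 0 z = 2 * z)
    (hCrec : ∀ n z, C (n + 1) z =
      2 * ∫ x in (0 : ℝ)..z, (∫ r in Ioc 0 x, C n r ∂ m.measure)) :
    ∀ n : ℕ, (∀ z, 0 ≤ z → 0 ≤ C n z) ∧ MonotoneOn (C n) (Ici 0) ∧
      (∀ z, 0 ≤ z →
        C n z ≤ (2 * z / Nat.factorial n) * (2 * ∫ x in (0 : ℝ)..z, M x) ^ n) := by
  obtain rfl : M = fun x => m x - m 0 := funext hM
  intro n
  induction n with
  | zero =>
    exact ⟨fun z hz => by rw [hC0]; linarith, fun a _ b _ hab => by rw [hC0, hC0]; linarith,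
      fun z _ => by simp [hC0]⟩
  | succ n ih =>
    obtain ⟨hnonneg, hmono, hle⟩ := ih
    set g := fun x => ∫ r in Ioc 0 x, C n r ∂m.measure
    have hg0 : ∀ x, 0 ≤ x → 0 ≤ g x := fun x _ =>
      setIntegral_nonneg measurableSet_Ioc fun r hr => hnonneg r hr.1.le
    have hg : Monotone g := monotone_setIntegral_Ioc_zero hnonneg hmono
    rw [show C (n + 1) = fun z => 2 * ∫ x in (0 : ℝ)..z, g x from funext (hCrec n)]
    exact ⟨fun z hz => mul_nonneg zero_le_two (primitive_nonneg_of_nonneg hg0 hz),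
      fun a ha b hb hab => mul_le_mul_of_nonneg_left
        (monotoneOn_primitive_of_nonneg hg0 (fun b => hg.intervalIntegrable) ha hb hab)
        zero_le_two,
      fun z hz => two_mul_integral_setIntegral_Ioc_le m hnonneg hmono hle hz⟩

/-- The recursively defined functions `C_n` are nonnegative, nondecreasing on `[0,∞)`
and satisfy `C_n(z) ≤ (2z/n!)(2∫₀^z M)^n`, where `M(x) = m(x) - m(0)`. -/
theorem stmt_5 (m : StieltjesFunction ℝ)
    (hm_zero : ∀ x < (0 : ℝ), m x = 0)
    (hm_pos : ∀ x > (0 : ℝ), 0 < m x)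
    (M : ℝ → ℝ) (hM : ∀ x, M x = m x - m 0)
    (C : ℕ → ℝ → ℝ)
    (hC0 : ∀ z, C 0 z = 2 * z)
    (hCrec : ∀ n z, C (n + 1) z =
      2 * ∫ x in (0 : ℝ)..z, (∫ r in Ioc 0 x, C n r ∂ m.measure)) :
    ∀ n : ℕ, (∀ z, 0 ≤ z → 0 ≤ C n z) ∧ MonotoneOn (C n) (Ici 0) ∧
      (∀ z, 0 ≤ z →
        C n z ≤ (2 * z / Nat.factorial n) * (2 * ∫ x in (0 : ℝ)..z, M x) ^ n) :=
  stmt_5_general m M hM C hC0 hCrec
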